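/- arXiv:0907.5565 — 2 statements merged into one kernel-verified Lean document; each statement's English description precedes it below -/
import Mathlib

section
/- (Extension Lemma) Let Ω ⊆ ℍ be a symmetric slice domain, I ∈ S, and f_I : Ω ∩ L_I → ℍ a holomorphic function (with values in ℍ). Then the formula f(x+yJ) = ½[f_I(x+yI) + f_I(x−yI)] + J(I/2)[f_I(x−yI) − f_I(x+yI)] defines the unique slice regular function f : Ω → ℍ extending f_I. -/
noncomputable section

abbrev H := Quaternion ℝ

/-- The sphere of quaternion imaginary units. -/
def Sph : Set H := {q : H | q ^ 2 = -1}

/-- The complex line (Slice) through 1 and `I`. -/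
def Slice (I : H) : Set H := {q : H | ∃ x y : ℝ, q = (x : H) + y • I}

/-- The 2-sphere `x + y𝕊`. -/
def sphSet (x y : ℝ) : Set H := {q : H | ∃ I ∈ Sph, q = (x : H) + y • I}

/-- The real axis inside the quaternions. -/
def realAxis : Set H := {q : H | ∃ r : ℝ, q = (r : H)}

/-- `f` is holomorphic on the `I`-Slice of `Ω`: at every point of `Ω ∩ L_I` the
map `(x,y) ↦ f(x+yI)` is (real) differentiable and satisfies the
Cauchy–Riemann equation `∂f/∂x + I ∂f/∂y = 0`. -/
def HoloSlice (Ω : Set H) (f : H → H) (I : H) : Prop :=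
  ∀ x y : ℝ, (x : H) + y • I ∈ Ω →
    DifferentiableAt ℝ (fun p : ℝ × ℝ => f ((p.1 : H) + p.2 • I)) (x, y) ∧
    fderiv ℝ (fun p : ℝ × ℝ => f ((p.1 : H) + p.2 • I)) (x, y) (1, 0)
      + I * fderiv ℝ (fun p : ℝ × ℝ => f ((p.1 : H) + p.2 • I)) (x, y) (0, 1) = 0

/-- Slice regular functions: every Slice restriction is holomorphic. -/
def SliceRegular (Ω : Set H) (f : H → H) : Prop :=
  ∀ I ∈ Sph, HoloSlice Ω f I

/-- A Slice domain: a domain intersecting the real axis whose slices are domains. -/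
def IsSliceDomain (Ω : Set H) : Prop :=
  IsOpen Ω ∧ IsConnected Ω ∧ (Ω ∩ realAxis).Nonempty ∧
  ∀ I ∈ Sph, IsConnected (Ω ∩ Slice I)

/-- Axially symmetric set. -/
def AxSymm (C : Set H) : Prop :=
  ∀ (x y : ℝ), ∀ I ∈ Sph, (x : H) + y • I ∈ C → ∀ J ∈ Sph, (x : H) + y • J ∈ C

/-- Symmetric Slice domain. -/
def IsSymmSliceDomain (Ω : Set H) : Prop := IsSliceDomain Ω ∧ AxSymm Ω

/-- Orthogonality of quaternions w.r.t. the Euclidean inner product `re (p * star q)`. -/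
def Orth (I J : H) : Prop := (I * star J).re = 0

/-- `F, G` give a splitting `f = F + G J` of `f` on the Slice `Ω ∩ L_I`,
with `F, G` holomorphic and `L_I`-valued. -/
structure IsSplitting (Ω : Set H) (f : H → H) (I J : H) (F G : H → H) : Prop where
  mapsF : ∀ q ∈ Ω ∩ Slice I, F q ∈ Slice I
  mapsG : ∀ q ∈ Ω ∩ Slice I, G q ∈ Slice I
  holoF : HoloSlice Ω F I
  holoG : HoloSlice Ω G I
  eq : ∀ q ∈ Ω ∩ Slice I, f q = F q + G q * J

/-- `h` is the regular product `f * g`: it is Slice regular and restricts on some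
Slice `L_I` (with `I ⊥ J`, splittings `f = F + GJ`, `g = F' + G'J`) to the
product formula.  (Note `star` is quaternionic conjugation, which restricts to
complex conjugation on each Slice.) -/
def IsRegularProduct (Ω : Set H) (f g h : H → H) : Prop :=
  SliceRegular Ω h ∧
  ∃ I ∈ Sph, ∃ J ∈ Sph, Orth I J ∧
    ∃ F G F' G' : H → H, IsSplitting Ω f I J F G ∧ IsSplitting Ω g I J F' G' ∧
      ∀ q ∈ Ω ∩ Slice I,
        h q = (F q * F' q - G q * star (G' (star q)))
            + (F q * G' q + G q * star (F' (star q))) * J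

/-- `fc` is the regular conjugate of `f`. -/
def IsRegularConj (Ω : Set H) (f fc : H → H) : Prop :=
  SliceRegular Ω fc ∧
  ∃ I ∈ Sph, ∃ J ∈ Sph, Orth I J ∧
    ∃ F G : H → H, IsSplitting Ω f I J F G ∧
      ∀ q ∈ Ω ∩ Slice I, fc q = star (F (star q)) - G q * J

/-- `fs` is the symmetrization `f^s = f * f^c` of `f`. -/
def IsSymmetrization (Ω : Set H) (f fs : H → H) : Prop :=
  ∃ fc : H → H, IsRegularConj Ω f fc ∧ IsRegularProduct Ω f fc fs

/-- The degenerate set of `f`: union of the spheres `x + y𝕊` (`y ≠ 0`)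
contained in `Ω` on which `f` is constant. -/
def DegSet (Ω : Set H) (f : H → H) : Set H :=
  {q : H | ∃ x y : ℝ, y ≠ 0 ∧ q ∈ sphSet x y ∧ sphSet x y ⊆ Ω ∧
    ∀ p ∈ sphSet x y, ∀ p' ∈ sphSet x y, f p = f p'}

/-!
Regroup the representation formula as
`f (x + yJ) = (1 - JI)/2 · fI (x + yI) + (1 + JI)/2 · fI (x - yI)`.
Since `J (1 - JI) = (1 - JI) I`, `J (1 + JI) = (1 + JI) (-I)`, and `(x, y) ↦ fI (x - yI)`
satisfies the Cauchy–Riemann equation for `-I`, both summands satisfy it for `J`; for `J = I`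
the coefficients are `1` and `0`, so `f` extends `fI`.
Uniqueness is the identity principle on each slice `L_J`: the ℝ-linear functionals
`⟪u, ·⟫ + i ⟪J u, ·⟫` turn left multiplication by `J` into multiplication by `i`, so they
map `J`-holomorphic functions to holomorphic functions on the connected open set
`{z | Re z + Im z · J ∈ Ω}`, and there two such functions agreeing on a real interval agree.
-/

open Filter Topology RealInnerProductSpace

lemma mem_Sph_iff {q : H} : q ∈ Sph ↔ q.re = 0 ∧ ‖q‖ = 1 := by
  change q ^ 2 = -1 ↔ _
  rw [norm_eq_sqrt_real_inner, Quaternion.inner_self, Real.sqrt_eq_one]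
  constructor
  · intro h
    have hre : q.re = 0 := by
      have h₁ := congrArg QuaternionAlgebra.re h
      have h₂ := congrArg QuaternionAlgebra.imI h
      have h₃ := congrArg QuaternionAlgebra.imJ h
      have h₄ := congrArg QuaternionAlgebra.imK h
      simp only [sq, Quaternion.re_mul, Quaternion.imI_mul, Quaternion.imJ_mul,
        Quaternion.imK_mul, Quaternion.re_neg, Quaternion.imI_neg, Quaternion.imJ_neg,
        Quaternion.imK_neg, Quaternion.re_one, Quaternion.imI_one, Quaternion.imJ_one,
        Quaternion.imK_one] at h₁ h₂ h₃ h₄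
      nlinarith [sq_nonneg q.re, sq_nonneg q.imI, sq_nonneg q.imJ, sq_nonneg q.imK]
    rw [Quaternion.sq_eq_neg_normSq.mpr hre, neg_inj] at h
    exact ⟨hre, Quaternion.coe_injective h⟩
  · rintro ⟨hre, hn⟩
    rw [Quaternion.sq_eq_neg_normSq.mpr hre, hn, Quaternion.coe_one]

lemma Sph_nonempty : Sph.Nonempty := by
  let i : H := ⟨0, 1, 0, 0⟩
  refine ⟨i, mem_Sph_iff.mpr ⟨rfl, ?_⟩⟩
  rw [norm_eq_sqrt_real_inner, Quaternion.inner_self, Quaternion.normSq_def']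
  simp [i]

lemma mul_self_eq_neg_one_of_mem_Sph {J : H} (hJ : J ∈ Sph) : J * J = -1 := by
  rw [← sq]; exact hJ

lemma neg_mem_Sph {J : H} (hJ : J ∈ Sph) : -J ∈ Sph := by
  change (-J) ^ 2 = -1
  rw [neg_sq]; exact hJ

lemma realAxis_subset_Slice (I : H) : realAxis ⊆ Slice I := by
  rintro _ ⟨r, rfl⟩
  exact ⟨r, 0, by rw [zero_smul, add_zero]⟩

lemma exists_mem_Sph_mem_Slice (q : H) : ∃ J ∈ Sph, q ∈ Slice J := by
  by_cases him : q.im = 0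
  · obtain ⟨J, hJ⟩ := Sph_nonempty
    refine ⟨J, hJ, q.re, 0, ?_⟩
    rw [zero_smul, add_zero, ← Quaternion.re_add_im q, him, add_zero, Quaternion.re_coe]
  · have hn : ‖q.im‖ ≠ 0 := norm_ne_zero_iff.mpr him
    refine ⟨‖q.im‖⁻¹ • q.im, mem_Sph_iff.mpr ⟨?_, ?_⟩, q.re, ‖q.im‖, ?_⟩
    · rw [Quaternion.re_smul, Quaternion.re_im, smul_zero]
    · rw [norm_smul, norm_inv, norm_norm, inv_mul_cancel₀ hn]
    · rw [smul_smul, mul_inv_cancel₀ hn, one_smul, Quaternion.re_add_im]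

def sliceFormula (fI : H → H) (I : H) (x y : ℝ) (J : H) : H :=
  ((2 : ℝ)⁻¹ • (1 - J * I)) * fI ((x : H) + y • I)
    + ((2 : ℝ)⁻¹ • (1 + J * I)) * fI ((x : H) + (-y) • I)

-- For real `q` the direction `‖q.im‖⁻¹ • q.im` is the junk value `0`, harmless because
-- `sliceFormula fI I x 0 J` does not depend on `J`.
def sliceExtension (fI : H → H) (I q : H) : H :=
  sliceFormula fI I q.re ‖q.im‖ (‖q.im‖⁻¹ • q.im)

section SliceFormula

variable (fI : H → H) (I : H) (x y : ℝ) (J : H)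

lemma sliceFormula_eq :
    sliceFormula fI I x y J =
      (2 : ℝ)⁻¹ • (fI ((x : H) + y • I) + fI ((x : H) + (-y) • I))
        + J * ((2 : ℝ)⁻¹ • (I * (fI ((x : H) + (-y) • I) - fI ((x : H) + y • I)))) := by
  simp only [sliceFormula, smul_mul_assoc, mul_smul_comm, sub_mul, add_mul, one_mul, mul_assoc,
    mul_sub]
  module

lemma sliceFormula_neg_neg : sliceFormula fI I x (-y) (-J) = sliceFormula fI I x y J := by
  simp only [sliceFormula, neg_neg, neg_mul, sub_neg_eq_add, ← sub_eq_add_neg]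
  exact add_comm _ _

lemma sliceFormula_zero : sliceFormula fI I x 0 J = fI x := by
  rw [sliceFormula, neg_zero, zero_smul, add_zero, ← add_mul, ← smul_add, sub_add_add_cancel,
    ← two_smul ℝ, smul_smul, inv_mul_cancel₀ two_ne_zero, one_smul, one_mul]

variable {I} in
lemma sliceFormula_self (hI : I ∈ Sph) : sliceFormula fI I x y I = fI ((x : H) + y • I) := by
  rw [sliceFormula, mul_self_eq_neg_one_of_mem_Sph hI, sub_neg_eq_add, add_neg_cancel, smul_zero,
    zero_mul, add_zero, ← two_smul ℝ, smul_smul, inv_mul_cancel₀ two_ne_zero, one_smul,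
    one_mul]

variable {J} in
lemma sliceExtension_apply (hJ : J ∈ Sph) :
    sliceExtension fI I ((x : H) + y • J) = sliceFormula fI I x y J := by
  obtain ⟨hre, hnorm⟩ := mem_Sph_iff.mp hJ
  have him : ((x : H) + y • J).im = y • J := by
    have hJim : J.im = J := by ext <;> simp [hre]
    rw [Quaternion.im_add, Quaternion.im_coe, Quaternion.im_smul, hJim, zero_add]
  have hxre : ((x : H) + y • J).re = x := by simp [hre]
  have hn : ‖y • J‖ = |y| := by rw [norm_smul, hnorm, mul_one, Real.norm_eq_abs]
  rw [sliceExtension, hxre, him, hn]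
  rcases lt_trichotomy y 0 with hy | rfl | hy
  · rw [abs_of_neg hy, smul_smul, ← sliceFormula_neg_neg, neg_neg, inv_neg, neg_mul,
      inv_mul_cancel₀ hy.ne, neg_smul, one_smul, neg_neg]
  · simp only [sliceFormula_zero, abs_zero]
  · rw [abs_of_pos hy, smul_smul, inv_mul_cancel₀ hy.ne', one_smul]

variable {I} in
lemma sliceExtension_eq_of_mem_Slice (hI : I ∈ Sph) {q : H} (hq : q ∈ Slice I) :
    sliceExtension fI I q = fI q := by
  obtain ⟨x, y, rfl⟩ := hq
  rw [sliceExtension_apply fI I x y hI, sliceFormula_self fI x y hI]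

end SliceFormula

-- `HoloSlice Ω f J` unfolds to `IsCauchyRiemannAt J (fun p => f (p.1 + p.2 • J)) (x, y)` at
-- every `(x, y)` with `x + y J ∈ Ω`; the proofs below use this definitionally.
def IsCauchyRiemannAt (J : H) (φ : ℝ × ℝ → H) (p : ℝ × ℝ) : Prop :=
  DifferentiableAt ℝ φ p ∧ fderiv ℝ φ p (1, 0) + J * fderiv ℝ φ p (0, 1) = 0

namespace IsCauchyRiemannAt

variable {I J : H} {φ ψ : ℝ × ℝ → H} {p : ℝ × ℝ}

lemma add (hφ : IsCauchyRiemannAt J φ p) (hψ : IsCauchyRiemannAt J ψ p) :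
    IsCauchyRiemannAt J (fun q => φ q + ψ q) p := by
  refine ⟨hφ.1.add hψ.1, ?_⟩
  rw [fderiv_fun_add hφ.1 hψ.1]
  simp only [add_apply, mul_add]
  linear_combination (norm := abel) hφ.2 + hψ.2

lemma const_mul (hφ : IsCauchyRiemannAt I φ p) {c : H} (hc : J * c = c * I) :
    IsCauchyRiemannAt J (fun q => c * φ q) p := by
  refine ⟨hφ.1.const_mul c, ?_⟩
  rw [fderiv_const_mul hφ.1 c]
  simp only [smul_apply, smul_eq_mul, ← mul_assoc, hc]
  rw [mul_assoc, ← mul_add, hφ.2, mul_zero]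

lemma comp_conj (hφ : IsCauchyRiemannAt I φ (p.1, -p.2)) :
    IsCauchyRiemannAt (-I) (fun q => φ (q.1, -q.2)) p := by
  let σ : ℝ × ℝ →L[ℝ] ℝ × ℝ :=
    (ContinuousLinearMap.fst ℝ ℝ ℝ).prod (-ContinuousLinearMap.snd ℝ ℝ ℝ)
  have hσ :
      HasFDerivAt (fun q : ℝ × ℝ => φ (q.1, -q.2)) ((fderiv ℝ φ (p.1, -p.2)).comp σ) p :=
    hφ.1.hasFDerivAt.comp p σ.hasFDerivAt
  refine ⟨hσ.differentiableAt, ?_⟩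
  rw [hσ.fderiv]
  have hneg : ((0 : ℝ), (-1 : ℝ)) = -((0 : ℝ), (1 : ℝ)) := by simp
  simp only [ContinuousLinearMap.coe_comp, Function.comp_apply, σ, ContinuousLinearMap.prod_apply,
    ContinuousLinearMap.coe_fst', ContinuousLinearMap.coe_snd', neg_apply, neg_zero, hneg, map_neg,
    neg_mul, mul_neg, neg_neg]
  exact hφ.2

lemma differentiableAt_complex (hJ : J ∈ Sph) {z : ℂ}
    (hφ : IsCauchyRiemannAt J φ (z.re, z.im)) {L : H →L[ℝ] ℂ}
    (hL : ∀ w, L (J * w) = Complex.I * L w) :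
    DifferentiableAt ℂ (fun w : ℂ => L (φ (w.re, w.im))) z := by
  set D := fderiv ℝ φ (z.re, z.im)
  have hD : HasFDerivAt (fun w : ℂ => L (φ (w.re, w.im)))
      (L.comp (D.comp Complex.equivRealProdCLM.toContinuousLinearMap)) z :=
    L.hasFDerivAt.comp z (hφ.1.hasFDerivAt.comp z Complex.equivRealProdCLM.hasFDerivAt)
  have hJD : D (0, 1) = J * D (1, 0) := by
    have h := congrArg (J * ·) hφ.2
    simp only [mul_add, ← mul_assoc, mul_self_eq_neg_one_of_mem_Sph hJ, neg_one_mul,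
      mul_zero] at h
    exact (add_neg_eq_zero.mp h).symm
  refine (hD.complexOfReal_hasFDerivAt ?_).differentiableAt
  simp [hJD, hL]

end IsCauchyRiemannAt

lemma sliceRegular_sliceExtension {Ω : Set H} (hΩ : AxSymm Ω) {I : H} (hI : I ∈ Sph)
    {fI : H → H} (hfI : HoloSlice Ω fI I) : SliceRegular Ω (sliceExtension fI I) := by
  intro J hJ x y hxy
  have hII := mul_self_eq_neg_one_of_mem_Sph hI
  have hJJ := mul_self_eq_neg_one_of_mem_Sph hJ
  let A : ℝ × ℝ → H := fun p => fI ((p.1 : H) + p.2 • I)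
  have hA : IsCauchyRiemannAt I A (x, y) := hfI x y (hΩ x y J hJ hxy I hI)
  have hA' : IsCauchyRiemannAt I A (x, -y) := by
    refine hfI x (-y) ?_
    rw [neg_smul, ← smul_neg]
    exact hΩ x y J hJ hxy (-I) (neg_mem_Sph hI)
  have hc : J * ((2 : ℝ)⁻¹ • (1 - J * I)) = ((2 : ℝ)⁻¹ • (1 - J * I)) * I := by
    rw [mul_smul_comm, smul_mul_assoc, mul_sub, sub_mul, mul_one, one_mul, ← mul_assoc, hJJ,
      mul_assoc, hII, neg_one_mul, mul_neg_one, sub_neg_eq_add, sub_neg_eq_add, add_comm]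
  have hc' : J * ((2 : ℝ)⁻¹ • (1 + J * I)) = ((2 : ℝ)⁻¹ • (1 + J * I)) * -I := by
    rw [mul_smul_comm, smul_mul_assoc, mul_add, add_mul, mul_one, one_mul, ← mul_assoc, hJJ,
      mul_neg, mul_assoc, hII, neg_one_mul, mul_neg_one, neg_neg, add_comm (-I)]
  have hfun : (fun p : ℝ × ℝ => sliceExtension fI I ((p.1 : H) + p.2 • J)) =
      fun p =>
        ((2 : ℝ)⁻¹ • (1 - J * I)) * A p + ((2 : ℝ)⁻¹ • (1 + J * I)) * A (p.1, -p.2) :=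
    funext fun p => sliceExtension_apply fI I p.1 p.2 hJ
  change IsCauchyRiemannAt J
    (fun p : ℝ × ℝ => sliceExtension fI I ((p.1 : H) + p.2 • J)) (x, y)
  rw [hfun]
  exact (hA.const_mul hc).add (IsCauchyRiemannAt.comp_conj hA' |>.const_mul hc')

def slicePlane (J : H) (z : ℂ) : H := (z.re : H) + z.im • J

lemma continuous_slicePlane (J : H) : Continuous (slicePlane J) :=
  (Quaternion.continuous_coe.comp Complex.continuous_re).add
    (Complex.continuous_im.smul continuous_const)

lemma slicePlane_ofReal (J : H) (t : ℝ) : slicePlane J t = t := by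
  simp [slicePlane]

lemma range_slicePlane (J : H) : Set.range (slicePlane J) = Slice J := by
  ext q
  constructor
  · rintro ⟨z, rfl⟩
    exact ⟨z.re, z.im, rfl⟩
  · rintro ⟨x, y, rfl⟩
    exact ⟨⟨x, y⟩, rfl⟩

lemma isEmbedding_slicePlane {J : H} (hJ : J ∈ Sph) : Topology.IsEmbedding (slicePlane J) := by
  have hre := (mem_Sph_iff.mp hJ).1
  have hJJ := mul_self_eq_neg_one_of_mem_Sph hJ
  refine .of_leftInverse (f := fun q : H => (q.re : ℂ) - (q * J).re * Complex.I) (fun z => ?_)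
    ?_ (continuous_slicePlane J)
  · have hJJre : (J * J).re = -1 := by rw [hJJ]; rfl
    apply Complex.ext <;> simp [slicePlane, add_mul, hJJre, hre]
  · exact (Complex.continuous_ofReal.comp Quaternion.continuous_re).sub
      ((Complex.continuous_ofReal.comp (Quaternion.continuous_re.comp
        (continuous_mul_const J))).mul continuous_const)

def sliceFunctional (J u : H) : H →L[ℝ] ℂ :=
  Complex.ofRealCLM.comp (innerSL ℝ u)
    + Complex.I • Complex.ofRealCLM.comp (innerSL ℝ (J * u))

lemma re_sliceFunctional (J u w : H) : (sliceFunctional J u w).re = ⟪u, w⟫ := by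
  simp [sliceFunctional]

lemma sliceFunctional_mul_left {J : H} (hJ : J ∈ Sph) (u w : H) :
    sliceFunctional J u (J * w) = Complex.I * sliceFunctional J u w := by
  obtain ⟨hre, hnorm⟩ := mem_Sph_iff.mp hJ
  have hn : J.re ^ 2 + J.imI ^ 2 + J.imJ ^ 2 + J.imK ^ 2 = 1 := by
    rw [← Quaternion.normSq_def', ← Quaternion.inner_self, real_inner_self_eq_norm_sq, hnorm,
      one_pow]
  have h₁ : ⟪u, J * w⟫ = -⟪J * u, w⟫ := by
    simp only [Quaternion.inner_def, Quaternion.re_mul, Quaternion.imI_mul, Quaternion.imJ_mul,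
      Quaternion.imK_mul, Quaternion.re_star, Quaternion.imI_star, Quaternion.imJ_star,
      Quaternion.imK_star, hre]
    ring
  have h₂ : ⟪J * u, J * w⟫ = ⟪u, w⟫ := by
    simp only [Quaternion.inner_def, Quaternion.re_mul, Quaternion.imI_mul, Quaternion.imJ_mul,
      Quaternion.imK_mul, Quaternion.re_star, Quaternion.imI_star, Quaternion.imJ_star,
      Quaternion.imK_star]
    linear_combination (u.re * w.re + u.imI * w.imI + u.imJ * w.imJ + u.imK * w.imK) * hn
  apply Complex.ext <;> simp [sliceFunctional, h₁, h₂]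

lemma HoloSlice.differentiableOn {Ω : Set H} {f : H → H} {J : H} (hf : HoloSlice Ω f J)
    (hJ : J ∈ Sph) {L : H →L[ℝ] ℂ} (hL : ∀ w, L (J * w) = Complex.I * L w) :
    DifferentiableOn ℂ (fun z => L (f (slicePlane J z))) (slicePlane J ⁻¹' Ω) :=
  fun z hz =>
    (IsCauchyRiemannAt.differentiableAt_complex hJ (hf z.re z.im hz) hL).differentiableWithinAt

lemma frequently_nhdsNE_ofReal {P : ℂ → Prop} {r : ℝ} (h : ∀ᶠ t : ℝ in 𝓝 r, P t) :
    ∃ᶠ z in 𝓝[≠] (r : ℂ), P z :=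
  have hne : ∀ᶠ t : ℝ in 𝓝[≠] r, P t := h.filter_mono nhdsWithin_le_nhds
  (Complex.continuous_ofReal.continuousWithinAt.tendsto_nhdsWithin
    fun _ ht => Complex.ofReal_injective.ne ht).frequently hne.frequently

lemma HoloSlice.eqOn_of_eqOn_realAxis {Ω : Set H} {f g : H → H} {J : H} (hf : HoloSlice Ω f J)
    (hg : HoloSlice Ω g J) (hΩ : IsOpen Ω) (hJ : J ∈ Sph)
    (hconn : IsPreconnected (Ω ∩ Slice J))
    (hreal : (Ω ∩ realAxis).Nonempty) (hfg : Set.EqOn f g (Ω ∩ realAxis)) :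
    Set.EqOn f g (Ω ∩ Slice J) := by
  set U := slicePlane J ⁻¹' Ω
  have hUopen : IsOpen U := hΩ.preimage (continuous_slicePlane J)
  have hUconn : IsPreconnected U := by
    rwa [← (isEmbedding_slicePlane hJ).isInducing.isPreconnected_image,
      Set.image_preimage_eq_inter_range, range_slicePlane]
  obtain ⟨_, hrΩ, r, rfl⟩ := hreal
  have hrU : (r : ℂ) ∈ U := by rwa [Set.mem_preimage, slicePlane_ofReal]
  have key (u : H) : Set.EqOn (fun z => sliceFunctional J u (f (slicePlane J z)))
      (fun z => sliceFunctional J u (g (slicePlane J z))) U := by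
    have hfU := (hf.differentiableOn hJ (sliceFunctional_mul_left hJ u)).analyticOnNhd hUopen
    have hgU := (hg.differentiableOn hJ (sliceFunctional_mul_left hJ u)).analyticOnNhd hUopen
    refine hfU.eqOn_of_preconnected_of_frequently_eq hgU hUconn hrU (frequently_nhdsNE_ofReal ?_)
    filter_upwards [Quaternion.continuous_coe.continuousAt.preimage_mem_nhds (hΩ.mem_nhds hrΩ)]
      with t ht
    rw [slicePlane_ofReal, hfg ⟨ht, t, rfl⟩]
  rintro _ ⟨hqΩ, x, y, rfl⟩
  refine ext_inner_left ℝ fun u => ?_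
  have h := congrArg Complex.re (key u (show (⟨x, y⟩ : ℂ) ∈ U from hqΩ))
  simp only [re_sliceFunctional] at h
  exact h

/-- Extension Lemma: a holomorphic `f_I : Ω ∩ L_I → ℍ` extends,
via the stated formula, to a unique slice regular `f : Ω → ℍ`. -/
theorem extension_lemma (Ω : Set H) (hΩ : IsSymmSliceDomain Ω)
    (I : H) (hI : I ∈ Sph) (fI : H → H) (hfI : HoloSlice Ω fI I) :
    ∃ f : H → H, SliceRegular Ω f ∧
      (∀ q ∈ Ω ∩ Slice I, f q = fI q) ∧
      (∀ x y : ℝ, ∀ J ∈ Sph, (x : H) + y • J ∈ Ω →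
        f ((x : H) + y • J) =
          (2 : ℝ)⁻¹ • (fI ((x : H) + y • I) + fI ((x : H) + (-y) • I))
          + J * ((2 : ℝ)⁻¹ • (I * (fI ((x : H) + (-y) • I) - fI ((x : H) + y • I))))) ∧
      (∀ g : H → H, SliceRegular Ω g → (∀ q ∈ Ω ∩ Slice I, g q = fI q) →
        Set.EqOn g f Ω) := by
  obtain ⟨⟨hopen, -, hreal, hslices⟩, hsymm⟩ := hΩ
  have hreg := sliceRegular_sliceExtension hsymm hI hfI
  refine ⟨sliceExtension fI I, hreg, fun q hq => sliceExtension_eq_of_mem_Slice fI hI hq.2,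
    fun x y J hJ _ => by rw [sliceExtension_apply fI I x y hJ, sliceFormula_eq], ?_⟩
  intro g hg hgI q hq
  have hreal_eq : Set.EqOn g (sliceExtension fI I) (Ω ∩ realAxis) := fun p hp => by
    have hpI := realAxis_subset_Slice I hp.2
    rw [hgI p ⟨hp.1, hpI⟩, sliceExtension_eq_of_mem_Slice fI hI hpI]
  obtain ⟨J, hJ, hqJ⟩ := exists_mem_Sph_mem_Slice q
  exact (hg J hJ).eqOn_of_eqOn_realAxis (hreg J hJ) hopen hJ (hslices J hJ).isPreconnected hreal
    hreal_eq ⟨hq, hqJ⟩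
end
end

section
/- Let Ω ⊆ ℍ be a symmetric slice domain and f, g : Ω → ℍ slice regular. For q ∈ Ω, the regular product satisfies: f*g(q) = 0 if f(q) = 0, and f*g(q) = f(q) · g(f(q)⁻¹ q f(q)) if f(q) ≠ 0. Consequently f*g(q) = 0 if and only if f(q) = 0, or f(q) ≠ 0 and g(f(q)⁻¹ q f(q)) = 0. -/
noncomputable section

/-! A slice regular `u` is determined on each sphere `x + y𝕊 ⊆ Ω` by two quaternions:
`u (x + yK) = s + K t` with `s, t` independent of `K` (representation formula). This follows from
the identity principle on the slice `L_K`: the relations `(1 - KI) I = K (1 - KI)` and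
`(1 + KI) (-I) = K (1 + KI)` make `(1 - KI) u(x + yI) + (1 + KI) u(x - yI)` holomorphic on `L_K`,
and it agrees with `2 u` on the real axis.

On the slice `L_I` of the splittings the product formula reads `f*g(z) = F(z) g(z) + G(z) J g(z̄)`,
which rearranges to `f*g(z) = f(z) s + I f(z) t` where `g(x + yK) = s + K t`. Both sides are affine
in the imaginary unit, so their agreement at `±I` gives `f*g(q) = f(q) s + K f(q) t` for every
`q = x + yK ∈ Ω`. When `f(q) ≠ 0` the right side is `f(q) (s + (f(q)⁻¹ K f(q)) t)`, that is
`f(q) g(f(q)⁻¹ q f(q))`. -/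

open Filter Topology

namespace Sph

variable {I : H}

theorem mul_self (hI : I ∈ Sph) : I * I = -1 := by
  rw [← sq]; exact hI

theorem ne_zero (hI : I ∈ Sph) : I ≠ 0 := by
  rintro rfl
  simpa using mul_self hI

theorem neg_mem (hI : I ∈ Sph) : -I ∈ Sph := by
  simpa only [Sph, Set.mem_ofPred_eq, neg_sq] using hI

theorem normSq_eq_one (hI : I ∈ Sph) : Quaternion.normSq I = 1 := by
  have h : Quaternion.normSq I ^ 2 = 1 := by
    rw [sq, ← map_mul, mul_self hI, Quaternion.normSq_neg, map_one]
  exact (pow_eq_one_iff_of_nonneg Quaternion.normSq_nonneg two_ne_zero).1 h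

theorem re_eq_zero (hI : I ∈ Sph) : I.re = 0 := by
  rw [← Quaternion.sq_eq_neg_normSq, normSq_eq_one hI]; exact hI

theorem star_eq_neg (hI : I ∈ Sph) : star I = -I :=
  Quaternion.star_eq_neg.2 (re_eq_zero hI)

theorem inv_mul_mul_mem (hI : I ∈ Sph) {p : H} (hp : p ≠ 0) : p⁻¹ * I * p ∈ Sph := by
  rw [Sph, Set.mem_ofPred_eq, sq,
    show p⁻¹ * I * p * (p⁻¹ * I * p) = p⁻¹ * (I * (p * p⁻¹) * I) * p by noncomm_ring,
    mul_inv_cancel₀ hp, mul_one, mul_self hI, mul_neg_one, neg_mul, inv_mul_cancel₀ hp]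

theorem exists_eq_add_smul (q : H) : ∃ (x y : ℝ) (K : H), K ∈ Sph ∧ q = (x : H) + y • K := by
  by_cases him : q.im = 0
  · have hK : Quaternion.normSq (@id H ⟨0, 1, 0, 0⟩) = 1 := by
      rw [Quaternion.normSq_def']; norm_num [id]
    refine ⟨q.re, 0, @id H ⟨0, 1, 0, 0⟩, ?_, ?_⟩
    · rw [Sph, Set.mem_ofPred_eq, Quaternion.sq_eq_neg_normSq.2 rfl, hK, Quaternion.coe_one]
    · rw [zero_smul, add_zero]
      nth_rw 1 [← Quaternion.re_add_im q]
      rw [him, add_zero]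
  · have hn : ‖q.im‖ ≠ 0 := norm_ne_zero_iff.2 him
    refine ⟨q.re, ‖q.im‖, ‖q.im‖⁻¹ • q.im, ?_, ?_⟩
    · rw [Sph, Set.mem_ofPred_eq, smul_pow, Quaternion.im_sq,
        Quaternion.normSq_eq_norm_mul_self, smul_neg, ← Quaternion.coe_mul_eq_smul,
        ← Quaternion.coe_mul, inv_pow, sq, inv_mul_cancel₀ (mul_ne_zero hn hn), Quaternion.coe_one]
    · rw [smul_smul, mul_inv_cancel₀ hn, one_smul, Quaternion.re_add_im]

end Sph

theorem mul_comm_of_mem_slice {I w : H} (hw : w ∈ Slice I) : I * w = w * I := by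
  obtain ⟨x, y, rfl⟩ := hw
  rw [mul_add, add_mul, Quaternion.coe_commutes, mul_smul_comm, smul_mul_assoc]

theorem mul_anticomm_of_orth {I J : H} (hI : I ∈ Sph) (hJ : J ∈ Sph) (hIJ : Orth I J) :
    J * I = -(I * J) := by
  have hre : (I * J).re = 0 := by
    have := hIJ
    rwa [Orth, Sph.star_eq_neg hJ, mul_neg, Quaternion.re_neg, neg_eq_zero] at this
  have hstar : star (I * J) = J * I := by
    rw [star_mul, Sph.star_eq_neg hI, Sph.star_eq_neg hJ, neg_mul_neg]
  rw [← hstar, eq_neg_iff_add_eq_zero, add_comm, Quaternion.self_add_star, hre]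
  simp

theorem mul_eq_star_mul_of_mem_slice {I J w : H} (hI : I ∈ Sph) (hIJ : J * I = -(I * J))
    (hw : w ∈ Slice I) : J * w = star w * J := by
  obtain ⟨x, y, rfl⟩ := hw
  rw [star_add, Quaternion.star_coe, Quaternion.star_smul, Sph.star_eq_neg hI, mul_add, add_mul,
    ← Quaternion.coe_commutes, mul_smul_comm, hIJ, smul_mul_assoc, neg_mul, smul_neg]

theorem star_add_smul {I : H} (hI : I ∈ Sph) (x y : ℝ) :
    star ((x : H) + y • I) = (x : H) + y • -I := by
  rw [star_add, Quaternion.star_coe, Quaternion.star_smul, Sph.star_eq_neg hI]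

def sliceEmb {K : H} (hK : K ∈ Sph) : ℂ →ₐ[ℝ] H := Complex.liftAux K (Sph.mul_self hK)

theorem sliceEmb_apply {K : H} (hK : K ∈ Sph) (z : ℂ) : sliceEmb hK z = (z.re : H) + z.im • K :=
  Complex.liftAux_apply K _ z

theorem norm_sliceEmb {K : H} (hK : K ∈ Sph) (z : ℂ) : ‖sliceEmb hK z‖ = ‖z‖ := by
  have hstar : star (sliceEmb hK z) = sliceEmb hK (starRingEnd ℂ z) := by
    rw [sliceEmb_apply, sliceEmb_apply, star_add_smul hK, Complex.conj_re, Complex.conj_im,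
      smul_neg, neg_smul]
  have hnormSq : ((Quaternion.normSq (sliceEmb hK z) : ℝ) : H) = ((Complex.normSq z : ℝ) : H) := by
    rw [← Quaternion.self_mul_star, hstar, ← map_mul, Complex.mul_conj, sliceEmb_apply]
    simp
  rw [Quaternion.coe_inj, Quaternion.normSq_eq_norm_mul_self, Complex.normSq_eq_norm_sq, sq]
    at hnormSq
  exact mul_self_inj (norm_nonneg _) (norm_nonneg _) |>.1 hnormSq

theorem isometry_sliceEmb {K : H} (hK : K ∈ Sph) : Isometry (sliceEmb hK) :=
  AddMonoidHomClass.isometry_of_norm _ (norm_sliceEmb hK)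

theorem range_sliceEmb {K : H} (hK : K ∈ Sph) : Set.range (sliceEmb hK) = Slice K := by
  ext q
  simp only [Set.mem_range, sliceEmb_apply, Slice, Set.mem_ofPred_eq]
  exact ⟨fun ⟨z, hz⟩ => ⟨z.re, z.im, hz.symm⟩, fun ⟨x, y, hq⟩ => ⟨⟨x, y⟩, hq.symm⟩⟩

theorem frequently_ofReal_of_eventually {P : ℂ → Prop} {x₀ : ℝ} (h : ∀ᶠ t : ℝ in 𝓝 x₀, P t) :
    ∃ᶠ z in 𝓝[≠] (x₀ : ℂ), P z := by
  have hlim : Tendsto ((↑) : ℝ → ℂ) (𝓝[≠] x₀) (𝓝[≠] (x₀ : ℂ)) :=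
    tendsto_nhdsWithin_of_tendsto_nhds_of_eventually_within _
      Complex.continuous_ofReal.continuousWithinAt
      (eventually_nhdsWithin_of_forall fun t ht => Complex.ofReal_injective.ne ht)
  exact hlim.frequently (h.filter_mono nhdsWithin_le_nhds).frequently

def IsCRAt (A : H) (v : ℝ × ℝ → H) (p : ℝ × ℝ) : Prop :=
  ∃ L : ℝ × ℝ →L[ℝ] H, HasFDerivAt v L p ∧ L (1, 0) + A * L (0, 1) = 0

namespace IsCRAt

variable {A : H} {v w : ℝ × ℝ → H} {p : ℝ × ℝ}

theorem sub (hv : IsCRAt A v p) (hw : IsCRAt A w p) : IsCRAt A (fun q => v q - w q) p := by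
  obtain ⟨L, hL, hcrL⟩ := hv
  obtain ⟨M, hM, hcrM⟩ := hw
  refine ⟨L - M, hL.sub hM, ?_⟩
  simp only [sub_apply, mul_sub]
  rw [sub_add_sub_comm, hcrL, hcrM, sub_zero]

theorem const_mul {B : H} (c : H) (hc : c * A = B * c) (hv : IsCRAt A v p) :
    IsCRAt B (fun q => c * v q) p := by
  obtain ⟨L, hL, hcr⟩ := hv
  refine ⟨c • L, hL.const_mul c, ?_⟩
  simp only [smul_apply, smul_eq_mul]
  rw [← mul_assoc, ← hc, mul_assoc, ← mul_add, hcr, mul_zero]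

theorem exists_hasFDerivAt_apply_eq_sliceEmb_mul {K : H} (hK : K ∈ Sph) (hv : IsCRAt K v p) :
    ∃ L : ℝ × ℝ →L[ℝ] H,
      HasFDerivAt v L p ∧ ∀ c : ℂ, L (c.re, c.im) = sliceEmb hK c * L (1, 0) := by
  obtain ⟨L, hL, hcr⟩ := hv
  have hL01 : L (0, 1) = K * L (1, 0) := by
    have := congrArg (K * ·) hcr
    simp only [mul_add, ← mul_assoc, Sph.mul_self hK, neg_one_mul, mul_zero] at this
    exact (add_neg_eq_zero.1 this).symm
  refine ⟨L, hL, fun c => ?_⟩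
  have hc : ((c.re, c.im) : ℝ × ℝ) = c.re • (1, 0) + c.im • (0, 1) := by simp
  rw [hc, map_add, map_smul, map_smul, hL01, sliceEmb_apply, add_mul, smul_mul_assoc,
    Quaternion.coe_mul_eq_smul]

end IsCRAt

theorem HoloSlice.isCRAt {Ω : Set H} {u : H → H} {I : H} (hu : HoloSlice Ω u I) {x y : ℝ}
    (hxy : (x : H) + y • I ∈ Ω) : IsCRAt I (fun p : ℝ × ℝ => u ((p.1 : H) + p.2 • I)) (x, y) :=
  ⟨_, (hu x y hxy).1.hasFDerivAt, (hu x y hxy).2⟩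

theorem eq_zero_of_isCRAt {Ω : Set H} (hΩ : IsOpen Ω) {K : H} (hK : K ∈ Sph)
    (hconn : IsPreconnected (Ω ∩ Slice K)) {v : ℝ × ℝ → H}
    (hv : ∀ p : ℝ × ℝ, (p.1 : H) + p.2 • K ∈ Ω → IsCRAt K v p)
    {x₀ : ℝ} (hx₀ : (x₀ : H) ∈ Ω) (hreal : ∀ x : ℝ, (x : H) ∈ Ω → v (x, 0) = 0)
    {p : ℝ × ℝ} (hp : (p.1 : H) + p.2 • K ∈ Ω) : v p = 0 := by
  let _ : Module ℂ H := Module.compHom H (sliceEmb hK).toRingHom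
  have hsmul : ∀ (c : ℂ) (q : H), c • q = sliceEmb hK c * q := fun _ _ => rfl
  let _ : NormedSpace ℂ H := ⟨fun c q => by rw [hsmul, norm_mul, norm_sliceEmb]⟩
  have : IsScalarTower ℝ ℂ H := ⟨fun r c q => by rw [hsmul, hsmul, map_smul, smul_mul_assoc]⟩
  set U := sliceEmb hK ⁻¹' Ω
  set w : ℂ → H := fun z => v (z.re, z.im)
  have hmemU : ∀ z : ℂ, z ∈ U ↔ (z.re : H) + z.im • K ∈ Ω := fun z => by
    rw [Set.mem_preimage, sliceEmb_apply]
  have hUopen : IsOpen U := hΩ.preimage (isometry_sliceEmb hK).continuous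
  have hUconn : IsPreconnected U := by
    rwa [← (isometry_sliceEmb hK).isEmbedding.isInducing.isPreconnected_image,
      Set.image_preimage_eq_inter_range, range_sliceEmb]
  have hwdiff : DifferentiableOn ℂ w U := by
    intro z hz
    obtain ⟨L, hL, hLc⟩ :=
      (hv (z.re, z.im) ((hmemU z).1 hz)).exists_hasFDerivAt_apply_eq_sliceEmb_mul hK
    have hreal : HasFDerivAt w (L.comp Complex.equivRealProdCLM.toContinuousLinearMap) z :=
      hL.comp z Complex.equivRealProdCLM.toContinuousLinearMap.hasFDerivAt
    have hlin : (ContinuousLinearMap.toSpanSingleton ℂ (L (1, 0))).restrictScalars ℝ =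
        L.comp Complex.equivRealProdCLM.toContinuousLinearMap := by
      refine ContinuousLinearMap.ext fun c => ?_
      simp only [ContinuousLinearMap.coe_restrictScalars',
        ContinuousLinearMap.toSpanSingleton_apply, ContinuousLinearMap.coe_comp, Function.comp_apply, ContinuousLinearEquiv.coe_coe,
        Complex.equivRealProdCLM_apply, hsmul]
      exact (hLc c).symm
    exact (hasFDerivAt_of_restrictScalars ℝ hreal hlin).differentiableAt.differentiableWithinAt
  have hfreq : ∃ᶠ z in 𝓝[≠] (x₀ : ℂ), w z = 0 := by
    refine frequently_ofReal_of_eventually ?_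
    filter_upwards [Quaternion.continuous_coe.continuousAt.preimage_mem_nhds (hΩ.mem_nhds hx₀)]
      with t ht
    simpa [w] using hreal t ht
  have hx₀U : (x₀ : ℂ) ∈ U := by simpa [hmemU] using hx₀
  have hpU : (⟨p.1, p.2⟩ : ℂ) ∈ U := (hmemU _).2 hp
  exact (hwdiff.analyticOnNhd hUopen).eqOn_zero_of_preconnected_of_frequently_eq_zero hUconn hx₀U
    hfreq hpU

/-- `stem₁` and `stem₂` are the stem of `u` along `I`: for slice regular `u`,
`u (x + y K) = stem₁ u I x y + K * stem₂ u I x y` for every `K ∈ Sph`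
(`SliceRegular.apply_eq_stem`). -/
def stem₁ (u : H → H) (I : H) (x y : ℝ) : H :=
  (2 : ℝ)⁻¹ • (u ((x : H) + y • I) + u ((x : H) + y • -I))

def stem₂ (u : H → H) (I : H) (x y : ℝ) : H :=
  I * ((2 : ℝ)⁻¹ • (u ((x : H) + y • -I) - u ((x : H) + y • I)))

theorem stem₁_add_mul_stem₂ {I : H} (hI : I ∈ Sph) (u : H → H) (x y : ℝ) :
    stem₁ u I x y + I * stem₂ u I x y = u ((x : H) + y • I) := by
  rw [stem₁, stem₂, ← mul_assoc, Sph.mul_self hI, neg_one_mul]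
  module

theorem stem₁_add_neg_mul_stem₂ {I : H} (hI : I ∈ Sph) (u : H → H) (x y : ℝ) :
    stem₁ u I x y + -I * stem₂ u I x y = u ((x : H) + y • -I) := by
  rw [stem₁, stem₂, ← mul_assoc, neg_mul, Sph.mul_self hI, neg_neg, one_mul]
  module

theorem SliceRegular.apply_eq_stem {Ω : Set H} (hΩ : IsSymmSliceDomain Ω) {u : H → H}
    (hu : SliceRegular Ω u) {I K : H} (hI : I ∈ Sph) (hK : K ∈ Sph) {x y : ℝ}
    (hxy : (x : H) + y • K ∈ Ω) :
    u ((x : H) + y • K) = stem₁ u I x y + K * stem₂ u I x y := by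
  obtain ⟨⟨hopen, -, ⟨-, hx₀, x₀, rfl⟩, hslice⟩, hsym⟩ := hΩ
  have hcomm₁ : (1 - K * I) * I = K * (1 - K * I) := by
    rw [sub_mul, mul_sub, mul_assoc, Sph.mul_self hI, ← mul_assoc K K, Sph.mul_self hK]
    noncomm_ring
  have hcomm₂ : (1 + K * I) * -I = K * (1 + K * I) := by
    rw [add_mul, mul_add, mul_neg, mul_neg, mul_assoc, Sph.mul_self hI, ← mul_assoc K K,
      Sph.mul_self hK]
    noncomm_ring
  have hv := eq_zero_of_isCRAt hopen hK (hslice K hK).isPreconnected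
    (v := fun p : ℝ × ℝ => 2 * u ((p.1 : H) + p.2 • K) - (1 - K * I) * u ((p.1 : H) + p.2 • I)
      - (1 + K * I) * u ((p.1 : H) + p.2 • -I))
    (fun ⟨x, y⟩ hp =>
      ((((hu K hK).isCRAt hp).const_mul 2 (by rw [two_mul, mul_two])).sub
        (((hu I hI).isCRAt (hsym x y K hK hp I hI)).const_mul _ hcomm₁)).sub
        (((hu (-I) (Sph.neg_mem hI)).isCRAt (hsym x y K hK hp _ (Sph.neg_mem hI))).const_mul
          _ hcomm₂))
    hx₀ (fun x _ => by simp only [zero_smul, add_zero]; noncomm_ring) (p := (x, y)) hxy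
  simp only [two_mul, add_mul, sub_mul, one_mul] at hv
  rw [stem₁, stem₂, ← mul_assoc, mul_smul_comm, mul_sub]
  linear_combination (norm := module) (2⁻¹ : ℝ) • hv

theorem inv_mul_add_smul_mul {p : H} (hp : p ≠ 0) (K : H) (x y : ℝ) :
    p⁻¹ * ((x : H) + y • K) * p = (x : H) + y • (p⁻¹ * K * p) := by
  rw [mul_add, add_mul, ← Quaternion.coe_commutes, mul_assoc, inv_mul_cancel₀ hp, mul_one,
    mul_smul_comm, smul_mul_assoc, mul_assoc]

theorem IsSplitting.regularProduct_formula_eq {Ω : Set H} {g : H → H} {I J : H} {F G : H → H}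
    (hI : I ∈ Sph) (hJ : J ∈ Sph) (hIJ : Orth I J) (hsG : IsSplitting Ω g I J F G) {z : H}
    (hz : z ∈ Ω ∩ Slice I) (hz' : star z ∈ Ω ∩ Slice I) (a b : H) :
    (a * F z - b * star (G (star z))) + (a * G z + b * star (F (star z))) * J
      = a * g z + b * J * g (star z) := by
  have hJI := mul_anticomm_of_orth hI hJ hIJ
  have hJF := mul_eq_star_mul_of_mem_slice hI hJI (hsG.mapsF _ hz')
  have hJGJ : J * (G (star z) * J) = -star (G (star z)) := by
    rw [← mul_assoc, mul_eq_star_mul_of_mem_slice hI hJI (hsG.mapsG _ hz'), mul_assoc,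
      Sph.mul_self hJ, mul_neg_one]
  rw [hsG.eq z hz, hsG.eq _ hz', mul_add (b * J), mul_assoc b J, mul_assoc b J, hJF, hJGJ]
  noncomm_ring

theorem add_splitting_mul_eq {I J a b s t u v : H} (ha : I * a = a * I) (hb : I * b = b * I)
    (hJI : J * I = -(I * J)) (hu : u = s + I * t) (hv : v = s - I * t) :
    a * u + b * J * v = (a + b * J) * s + I * ((a + b * J) * t) := by
  subst hu hv
  have hbJ : I * (b * J) = -(b * J * I) := by
    rw [mul_assoc b J I, hJI, mul_neg, neg_neg, ← mul_assoc, hb, mul_assoc]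
  rw [← mul_assoc I, mul_add I, ha, hbJ]
  noncomm_ring

theorem eq_of_add_mul_eq_of_add_neg_mul_eq {I a b c d : H} (hI : I ≠ 0)
    (h₁ : a + I * b = c + I * d) (h₂ : a + -I * b = c + -I * d) (K : H) :
    a + K * b = c + K * d := by
  have hIb : I * b = I * d := by
    simp only [neg_mul] at h₂
    linear_combination (norm := module) (2⁻¹ : ℝ) • (h₁ - h₂)
  obtain rfl := mul_left_cancel₀ hI hIb
  obtain rfl := add_right_cancel h₁
  rfl

theorem add_mul_mul_add_mul_mul {K : H} (hK : K * K = -1) (a b s t : H) :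
    (a + K * b) * s + K * ((a + K * b) * t) = (a * s - b * t) + K * (b * s + a * t) := by
  rw [add_mul, add_mul, mul_add, ← mul_assoc K (K * b), ← mul_assoc K K, hK]
  noncomm_ring

theorem IsRegularProduct.apply_eq {Ω : Set H} (hΩ : IsSymmSliceDomain Ω) {f g h : H → H}
    (hf : SliceRegular Ω f) (hprod : IsRegularProduct Ω f g h) :
    ∃ I ∈ Sph, ∀ (x y : ℝ) (K : H), K ∈ Sph → (x : H) + y • K ∈ Ω →
      h ((x : H) + y • K) = f ((x : H) + y • K) * stem₁ g I x y
        + K * (f ((x : H) + y • K) * stem₂ g I x y) := by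
  obtain ⟨hh, I, hI, J, hJ, hIJ, F, G, F', G', hsF, hsG, hform⟩ := hprod
  refine ⟨I, hI, fun x y K hK hxyK => ?_⟩
  have hJI := mul_anticomm_of_orth hI hJ hIJ
  have hz : (x : H) + y • I ∈ Ω ∩ Slice I := ⟨hΩ.2 x y K hK hxyK I hI, x, y, rfl⟩
  have hz' : (x : H) + y • -I ∈ Ω ∩ Slice I :=
    ⟨hΩ.2 x y K hK hxyK _ (Sph.neg_mem hI), x, -y, by rw [smul_neg, neg_smul]⟩
  have hstar : star ((x : H) + y • I) = (x : H) + y • -I := star_add_smul hI x y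
  have hstar' : star ((x : H) + y • -I) = (x : H) + y • I := by
    rw [star_add_smul (Sph.neg_mem hI), neg_neg]
  set s := stem₁ g I x y
  set t := stem₂ g I x y
  have hgz := stem₁_add_mul_stem₂ hI g x y
  have hgz' := stem₁_add_neg_mul_stem₂ hI g x y
  have hhz : h ((x : H) + y • I) = f ((x : H) + y • I) * s + I * (f ((x : H) + y • I) * t) := by
    rw [hform _ hz, hsG.regularProduct_formula_eq hI hJ hIJ hz (hstar ▸ hz'), hsF.eq _ hz, hstar]
    exact add_splitting_mul_eq (mul_comm_of_mem_slice (hsF.mapsF _ hz))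
      (mul_comm_of_mem_slice (hsF.mapsG _ hz)) hJI hgz.symm
      (by rw [← hgz', neg_mul, sub_eq_add_neg])
  have hhz' : h ((x : H) + y • -I)
      = f ((x : H) + y • -I) * s + -I * (f ((x : H) + y • -I) * t) := by
    rw [hform _ hz', hsG.regularProduct_formula_eq hI hJ hIJ hz' (hstar' ▸ hz), hsF.eq _ hz',
      hstar']
    refine add_splitting_mul_eq ?_ ?_ (by rw [mul_neg, neg_mul, neg_neg, hJI, neg_neg]) hgz'.symm
      (by rw [← hgz, neg_mul, sub_neg_eq_add])
    · rw [neg_mul, mul_neg, mul_comm_of_mem_slice (hsF.mapsF _ hz')]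
    · rw [neg_mul, mul_neg, mul_comm_of_mem_slice (hsF.mapsG _ hz')]
  rw [hh.apply_eq_stem hΩ hI hK hxyK, hf.apply_eq_stem hΩ hI hK hxyK,
    add_mul_mul_add_mul_mul (Sph.mul_self hK)]
  refine eq_of_add_mul_eq_of_add_neg_mul_eq (Sph.ne_zero hI) ?_ ?_ K
  · rw [← add_mul_mul_add_mul_mul (Sph.mul_self hI), stem₁_add_mul_stem₂ hI,
      stem₁_add_mul_stem₂ hI]
    exact hhz
  · rw [← add_mul_mul_add_mul_mul (Sph.mul_self (Sph.neg_mem hI)), stem₁_add_neg_mul_stem₂ hI,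
      stem₁_add_neg_mul_stem₂ hI]
    exact hhz'

/-- formula and zeros of the regular product:
`f*g(q) = 0` if `f(q) = 0`, `f*g(q) = f(q)·g(f(q)⁻¹ q f(q))` otherwise;
and the characterization of the zeros of `f*g`. -/
theorem regular_product_formula_and_zeros (Ω : Set H) (hΩ : IsSymmSliceDomain Ω)
    (f g h : H → H) (hf : SliceRegular Ω f) (hg : SliceRegular Ω g)
    (hprod : IsRegularProduct Ω f g h) :
    ∀ q ∈ Ω,
      (f q = 0 → h q = 0) ∧
      (f q ≠ 0 → h q = f q * g ((f q)⁻¹ * q * f q)) ∧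
      (h q = 0 ↔ f q = 0 ∨ (f q ≠ 0 ∧ g ((f q)⁻¹ * q * f q) = 0)) := by
  intro q hq
  obtain ⟨I, hI, hprod⟩ := hprod.apply_eq hΩ hf
  obtain ⟨x, y, K, hK, rfl⟩ := Sph.exists_eq_add_smul q
  have hhq := hprod x y K hK hq
  have hformula : f (x + y • K) ≠ 0 →
      h (x + y • K) = f (x + y • K) * g ((f (x + y • K))⁻¹ * (x + y • K) * f (x + y • K)) := by
    intro hf0
    have hK' := Sph.inv_mul_mul_mem hK hf0
    have hconj : f (x + y • K) * ((f (x + y • K))⁻¹ * K * f (x + y • K)) = K * f (x + y • K) := by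
      rw [mul_assoc _ K, mul_inv_cancel_left₀ hf0]
    rw [inv_mul_add_smul_mul hf0, hg.apply_eq_stem hΩ hI hK' (hΩ.2 x y K hK hq _ hK'), hhq,
      mul_add, ← mul_assoc (f _) (_ * K * _), hconj, mul_assoc]
  refine ⟨fun hf0 => by rw [hhq, hf0, zero_mul, zero_mul, mul_zero, add_zero], hformula, ?_⟩
  by_cases hf0 : f (x + y • K) = 0
  · simp [hf0, hhq]
  · simp [hf0, hformula hf0]
end
end
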